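/- For all integers p, q, r: if p is even then x_{p,q,r} ▷ a = x_{p−1,−q,−r}, and if p is odd then x_{p,q,r} ▷ a = x_{p+1,−q,−r}. -/

import Mathlib

/-!
Since `x ▷ u` is the point symmetry `S_u` applied to `x`, the claim is an identity in the
permutation group of `Q`, in which `S_a`, `S_b`, `S_e`, `S_f` are involutions. The relations
`dea` and `bdf` say `S_d = S_e S_a = S_f S_b`, so conjugation by `S_a` and by `S_b` inverts
`S_d`; consequently `S_b S_a` centralises `S_d`, and since the relation `c(ab)^k ae` gives
`S_c = (S_d (S_b S_a)^k)⁻¹`, conjugation by `S_a` inverts `S_c` as well. Writing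
`x_{p,q,r} = S_d^r S_c^q W_p a` with `W_{2t} = (S_a S_b)^t`, `W_{2t+1} = S_b (S_a S_b)^t`,
the symmetry `S_a` passes through `S_d^r S_c^q` negating `q` and `r`, and `S_a W_p` is the
neighbouring word `W_{p ∓ 1}`.
-/

/-- A quandle as in the paper: a set with operations `▷` and `▷⁻¹` satisfying
axioms A1, A2, A3. -/
class PaperQuandle (Q : Type*) where
  rhd : Q → Q → Q
  rhdInv : Q → Q → Q
  fix : ∀ x : Q, rhd x x = x
  inv_rhd : ∀ x y : Q, rhdInv (rhd x y) y = x
  rhd_inv : ∀ x y : Q, rhd (rhdInv x y) y = x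
  self_distrib : ∀ x y z : Q, rhd (rhd x y) z = rhd (rhd x z) (rhd y z)

infixl:65 " ▷ " => PaperQuandle.rhd
infixl:65 " ▷⁻¹ " => PaperQuandle.rhdInv

/-- The point symmetry at `u`, as a permutation of `Q`: `x ↦ x ▷ u`,
with inverse `x ↦ x ▷⁻¹ u`. -/
def ptSym {Q : Type*} [PaperQuandle Q] (u : Q) : Equiv.Perm Q where
  toFun x := x ▷ u
  invFun x := x ▷⁻¹ u
  left_inv x := PaperQuandle.inv_rhd x u
  right_inv x := PaperQuandle.rhd_inv x u

/-- The element `x_{p,q,r} = a^{(ba)^t c^q d^r}` if `p = 2t`, and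
`a^{(ba)^t b c^q d^r}` if `p = 2t+1`.  Here the word `ba` (apply `b`, then `a`)
is the permutation `ptSym a * ptSym b`. -/
def X {Q : Type*} [PaperQuandle Q] (a b c d : Q) (p q r : ℤ) : Q :=
  if Even p then
    (ptSym d ^ r) ((ptSym c ^ q) (((ptSym a * ptSym b) ^ (p / 2)) a))
  else
    (ptSym d ^ r) ((ptSym c ^ q) ((((ptSym a * ptSym b) ^ ((p - 1) / 2)) a) ▷ b))

section Involutions

variable {G : Type*} [Group G] {a b x y : G}

theorem mul_eq_of_mul_mul_eq_one (ha : a * a = 1) (hb : b * b = 1) (h : a * b * x = 1) :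
    b * a = x := by
  rw [eq_inv_of_mul_eq_one_right h, mul_inv_rev, inv_eq_of_mul_eq_one_left ha,
    inv_eq_of_mul_eq_one_left hb]

theorem conj_mul_eq_inv_of_mul_self (ha : a * a = 1) (hb : b * b = 1) :
    a * (b * a) * a⁻¹ = (b * a)⁻¹ := by
  rw [inv_eq_of_mul_eq_one_left ha, mul_inv_rev, inv_eq_of_mul_eq_one_left ha,
    inv_eq_of_mul_eq_one_left hb, mul_assoc, mul_assoc, ha, mul_one]

theorem conj_zpow_eq_zpow_neg (h : a * x * a⁻¹ = x⁻¹) (j : ℤ) :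
    a * x ^ j * a⁻¹ = x ^ (-j) := by
  rw [← conj_zpow, h, inv_zpow, zpow_neg]

theorem mul_zpow_eq_zpow_neg_mul (h : a * x * a⁻¹ = x⁻¹) (j : ℤ) :
    a * x ^ j = x ^ (-j) * a := by
  rw [← conj_zpow_eq_zpow_neg h, inv_mul_cancel_right]

theorem commute_mul_of_conj_eq_inv (ha : a * x * a⁻¹ = x⁻¹) (hb : b * x * b⁻¹ = x⁻¹) :
    Commute x (b * a) := by
  refine (mul_inv_eq_iff_eq_mul.mp ?_).symm
  rw [mul_inv_rev, show b * a * x * (a⁻¹ * b⁻¹) = b * (a * x * a⁻¹) * b⁻¹ by group, ha,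
    ← conj_inv, hb, inv_inv]

theorem conj_mul_eq_inv_of_commute (hx : a * x * a⁻¹ = x⁻¹) (hy : a * y * a⁻¹ = y⁻¹)
    (hxy : Commute x y) : a * (x * y) * a⁻¹ = (x * y)⁻¹ := by
  rw [← conj_mul, hx, hy, ← mul_inv_rev, hxy.eq]

theorem conj_eq_inv_of_mul_zpow_mul_eq_one {c d : G} (k : ℤ) (ha : a * a = 1) (hb : b * b = 1)
    (had : a * d * a⁻¹ = d⁻¹) (hbd : b * d * b⁻¹ = d⁻¹) (h : d * (b * a) ^ k * c = 1) :
    a * c * a⁻¹ = c⁻¹ := by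
  obtain rfl : c = (d * (b * a) ^ k)⁻¹ := eq_inv_of_mul_eq_one_right h
  have hbak : a * (b * a) ^ k * a⁻¹ = ((b * a) ^ k)⁻¹ := by
    rw [conj_zpow_eq_zpow_neg (conj_mul_eq_inv_of_mul_self ha hb), zpow_neg]
  rw [← conj_inv, conj_mul_eq_inv_of_commute had hbak
    ((commute_mul_of_conj_eq_inv had hbd).zpow_right k)]

end Involutions

section DihedralWord

variable {G : Type*} [Group G] (a b : G)

def dihedralWord (p : ℤ) : G :=
  if Even p then (a * b) ^ (p / 2) else b * (a * b) ^ ((p - 1) / 2)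

variable {a b} {p : ℤ}

theorem mul_dihedralWord_of_even (ha : a * a = 1) (hp : Even p) :
    a * dihedralWord a b p = dihedralWord a b (p - 1) := by
  obtain ⟨t, rfl⟩ := hp
  have hodd : ¬Even (t + t - 1) := Int.not_even_iff_odd.mpr ⟨t - 1, by ring⟩
  rw [dihedralWord, dihedralWord, if_pos ⟨t, rfl⟩, if_neg hodd, show (t + t) / 2 = t by omega,
    show (t + t - 1 - 1) / 2 = t - 1 by omega]
  calc a * (a * b) ^ t = a * ((a * b) * (a * b) ^ (t - 1)) := by
        rw [← zpow_one_add, add_sub_cancel]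
    _ = b * (a * b) ^ (t - 1) := by rw [← mul_assoc, ← mul_assoc, ha, one_mul]

theorem mul_dihedralWord_of_odd (hp : Odd p) :
    a * dihedralWord a b p = dihedralWord a b (p + 1) := by
  obtain ⟨t, rfl⟩ := hp
  have hodd : ¬Even (2 * t + 1) := Int.not_even_iff_odd.mpr ⟨t, rfl⟩
  rw [dihedralWord, dihedralWord, if_neg hodd, if_pos ⟨t + 1, by ring⟩,
    show (2 * t + 1 - 1) / 2 = t by omega, show (2 * t + 1 + 1) / 2 = t + 1 by omega,
    ← mul_assoc, ← zpow_one_add, add_comm]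

end DihedralWord

theorem X_eq_dihedralWord {Q : Type*} [PaperQuandle Q] (a b c d : Q) (p q r : ℤ) :
    X a b c d p q r = (ptSym d ^ r * ptSym c ^ q * dihedralWord (ptSym a) (ptSym b) p) a := by
  unfold X dihedralWord
  split_ifs <;> rfl

theorem stmt_13_general
    {Q : Type*} [PaperQuandle Q] (k : ℤ) (a b c d e f : Q)
    (rel_a : ∀ x : Q, x ▷ a ▷ a = x)
    (rel_b : ∀ x : Q, x ▷ b ▷ b = x)
    (rel_e : ∀ x : Q, x ▷ e ▷ e = x)
    (rel_f : ∀ x : Q, x ▷ f ▷ f = x)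
    (rel_dea : ∀ x : Q, x ▷ d ▷ e ▷ a = x)
    (rel_bdf : ∀ x : Q, x ▷ b ▷ d ▷ f = x)
    (rel_cke : ∀ x : Q, (((ptSym b * ptSym a) ^ k) (x ▷ c)) ▷ a ▷ e = x) :
    ∀ p q r : ℤ,
      (Even p → X a b c d p q r ▷ a = X a b c d (p - 1) (-q) (-r)) ∧
      (Odd p → X a b c d p q r ▷ a = X a b c d (p + 1) (-q) (-r)) := by
  have hA : ptSym a * ptSym a = 1 := Equiv.ext rel_a
  have hB : ptSym b * ptSym b = 1 := Equiv.ext rel_b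
  have hE : ptSym e * ptSym e = 1 := Equiv.ext rel_e
  have hF : ptSym f * ptSym f = 1 := Equiv.ext rel_f
  have hFDB : ptSym f * ptSym d * ptSym b = 1 := Equiv.ext rel_bdf
  have hEA : ptSym e * ptSym a = ptSym d := mul_eq_of_mul_mul_eq_one hA hE (Equiv.ext rel_dea)
  have hFB : ptSym f * ptSym b = ptSym d :=
    mul_eq_of_mul_mul_eq_one hB hF (by rw [mul_assoc]; exact mul_eq_one_comm.mp hFDB)
  have hAD : ptSym a * ptSym d * (ptSym a)⁻¹ = (ptSym d)⁻¹ :=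
    hEA ▸ conj_mul_eq_inv_of_mul_self hA hE
  have hBD : ptSym b * ptSym d * (ptSym b)⁻¹ = (ptSym d)⁻¹ :=
    hFB ▸ conj_mul_eq_inv_of_mul_self hB hF
  have hAC : ptSym a * ptSym c * (ptSym a)⁻¹ = (ptSym c)⁻¹ :=
    conj_eq_inv_of_mul_zpow_mul_eq_one k hA hB hAD hBD (hEA ▸ Equiv.ext rel_cke)
  intro p q r
  have hX : X a b c d p q r ▷ a = (ptSym d ^ (-r) * ptSym c ^ (-q) *
      (ptSym a * dihedralWord (ptSym a) (ptSym b) p)) a := by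
    rw [X_eq_dihedralWord]
    change (ptSym a * (_ * _ * _)) a = _
    rw [← mul_assoc, ← mul_assoc, mul_zpow_eq_zpow_neg_mul hAD, mul_assoc _ (ptSym a),
      mul_zpow_eq_zpow_neg_mul hAC, ← mul_assoc, mul_assoc]
  exact ⟨fun hp => by rw [hX, mul_dihedralWord_of_even hA hp, X_eq_dihedralWord],
    fun hp => by rw [hX, mul_dihedralWord_of_odd hp, X_eq_dihedralWord]⟩

theorem stmt_13
    {Q : Type*} [PaperQuandle Q] (k : ℤ) (m n : ℕ) (a b c d e f : Q)
    (hk : 1 ≤ k) (hm : 0 < m) (hn : 0 < n)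
    (rel_a : ∀ x : Q, x ▷ a ▷ a = x)
    (rel_b : ∀ x : Q, x ▷ b ▷ b = x)
    (rel_e : ∀ x : Q, x ▷ e ▷ e = x)
    (rel_f : ∀ x : Q, x ▷ f ▷ f = x)
    (rel_c : ∀ x : Q, (ptSym c ^ m) x = x)
    (rel_d : ∀ x : Q, (ptSym d ^ n) x = x)
    (rel_dea : ∀ x : Q, x ▷ d ▷ e ▷ a = x)
    (rel_bdf : ∀ x : Q, x ▷ b ▷ d ▷ f = x)
    (rel_cke : ∀ x : Q, (((ptSym b * ptSym a) ^ k) (x ▷ c)) ▷ a ▷ e = x)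
    (rel_fca : ∀ x : Q, (((ptSym b * ptSym a) ^ (k - 1)) (x ▷ f ▷ c)) ▷ a = x) :
    ∀ p q r : ℤ,
      (Even p → X a b c d p q r ▷ a = X a b c d (p - 1) (-q) (-r)) ∧
      (Odd p → X a b c d p q r ▷ a = X a b c d (p + 1) (-q) (-r)) :=
  stmt_13_general k a b c d e f rel_a rel_b rel_e rel_f rel_dea rel_bdf rel_cke
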